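/- arXiv:2108.07734 — 3 statements merged into one kernel-verified Lean document; each statement's English description precedes it below -/
import Mathlib

section
/- Let H be a union of vertex-disjoint alternating paths and cycles formed by two matchings N and M' in a graph, where |N| \geq |M'| + s. Then there are at least s vertex-disjoint paths in H that alternate N-M'-...-M'-N, starting and ending with an N-edge, with both endpoints not covered by M'. Moreover, for any L, at most 2|M'|/(L-2) of these paths have length more than L, so at least s - 2|M'|/(L-2) of them have length at most L. -/
open Finset
open scoped Classical

section Defs

variable {V C E : Type*}

/-- The two endpoints of an edge of a multigraph given by endpoint functions `e₁ e₂`. -/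
def edgeEnds [DecidableEq V] (e₁ e₂ : E → V) (e : E) : Finset V := {e₁ e, e₂ e}

/-- A finite set of edges is a matching: all edges are non-loops and pairwise vertex-disjoint. -/
def IsMatchingE [DecidableEq V] (e₁ e₂ : E → V) (M : Finset E) : Prop :=
  (∀ e ∈ M, e₁ e ≠ e₂ e) ∧
  ∀ a ∈ M, ∀ b ∈ M, a ≠ b → Disjoint (edgeEnds e₁ e₂ a) (edgeEnds e₁ e₂ b)

/-- A set of edges is rainbow: all its edges have pairwise distinct colours. -/
def IsRainbow (col : E → C) (M : Finset E) : Prop := Set.InjOn col ↑M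

/-- The colour class of colour `c`: the set of all edges of colour `c`. -/
noncomputable def colourClass [Fintype E] (col : E → C) (c : C) : Finset E :=
  Finset.univ.filter fun e => col e = c

/-- The set of vertices covered by a set of edges `M`. -/
def matchedVerts [DecidableEq V] (e₁ e₂ : E → V) (M : Finset E) : Finset V :=
  M.biUnion (edgeEnds e₁ e₂)

/-- The set of vertices spanned by the colour class of `c`
(i.e. incident to at least one edge of colour `c`). -/
noncomputable def spannedVerts [Fintype V] [DecidableEq V] [Fintype E]
    (e₁ e₂ : E → V) (col : E → C) (c : C) : Finset V :=
  Finset.univ.filter fun v => ∃ e, col e = c ∧ (e₁ e = v ∨ e₂ e = v)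

/-- `u` and `v` are distinct vertices joined by an edge of colour `c`. -/
def adjOfColour (e₁ e₂ : E → V) (col : E → C) (c : C) (u v : V) : Prop :=
  u ≠ v ∧ ∃ e, col e = c ∧ ((e₁ e = u ∧ e₂ e = v) ∨ (e₁ e = v ∧ e₂ e = u))

/-- The colour class of `c` is a vertex-disjoint union of (non-trivial) cliques:
whenever `uv` and `vw` are edges of colour `c` with `u ≠ w`, also `uw` is an
edge of colour `c`. -/
def IsCliqueUnion (e₁ e₂ : E → V) (col : E → C) (c : C) : Prop :=
  ∀ u v w, adjOfColour e₁ e₂ col c u v → adjOfColour e₁ e₂ col c v w → u ≠ w →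
    adjOfColour e₁ e₂ col c u w

end Defs

section AltPaths

variable {V E : Type*}

/-- `es` is an alternating `N-M'-⋯-M'-N` path (a list of edges, of odd length,
edges at even positions in `N` and at odd positions in `M'`, consecutive edges
meeting in exactly one vertex and non-consecutive edges vertex-disjoint). -/
def IsAltNMPath [DecidableEq V] (e₁ e₂ : E → V) (N M' : Finset E) (es : List E) : Prop :=
  es ≠ [] ∧ es.length % 2 = 1 ∧
  (∀ i : ℕ, ∀ h : i < es.length,
    (if i % 2 = 0 then es.get ⟨i, h⟩ ∈ N else es.get ⟨i, h⟩ ∈ M')) ∧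
  (∀ i : ℕ, ∀ h : i + 1 < es.length,
    (edgeEnds e₁ e₂ (es.get ⟨i, Nat.lt_of_succ_lt h⟩) ∩
      edgeEnds e₁ e₂ (es.get ⟨i + 1, h⟩)).card = 1) ∧
  (∀ i j : ℕ, ∀ hi : i < es.length, ∀ hj : j < es.length, i + 2 ≤ j →
    Disjoint (edgeEnds e₁ e₂ (es.get ⟨i, hi⟩)) (edgeEnds e₁ e₂ (es.get ⟨j, hj⟩)))

/-- Both endpoints of the path `es` are uncovered by `M'`. -/
def FreeEndpoints [DecidableEq V] (e₁ e₂ : E → V) (M' : Finset E) (es : List E) : Prop :=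
  (∀ f, es.head? = some f → ∃ u ∈ edgeEnds e₁ e₂ f, u ∉ matchedVerts e₁ e₂ M') ∧
  (∀ f, es.getLast? = some f → ∃ u ∈ edgeEnds e₁ e₂ f, u ∉ matchedVerts e₁ e₂ M') ∧
  (∀ f, es = [f] → ∀ u ∈ edgeEnds e₁ e₂ f, u ∉ matchedVerts e₁ e₂ M')

end AltPaths

/-!
Induction on `N`. If `M'` covers every vertex of `N`, then `2|N| ≤ 2|M'|` and the empty family
will do. Otherwise pick `e = uv ∈ N` with `v` missed by `M'`. If `u` is missed as well, `[e]` is a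
new path, disjoint from the paths obtained for `N - e`. If `u` lies on `f = uw ∈ M'`, take the
paths obtained for `(N - e, M' - f)`: at most one of them meets `w`, and only in an end edge
(every inner `N`-edge of an alternating path is covered by its two `M'`-neighbours), so
prolonging that path by `f` and `e` gives as many paths for `(N, M')`.

A path longer than `L` has at least `L / 2` edges in `M'`, and disjoint paths share no edge, so
at most `2|M'| / L` of the paths are longer than `L`.
-/

theorem Finset.exists_fin_pairwise {α : Type*} {r : α → α → Prop} {P : Finset α}
    (hP : (P : Set α).Pairwise r) :
    ∃ f : Fin P.card → α, (∀ i, f i ∈ P) ∧ ∀ i j, i ≠ j → r (f i) (f j) :=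
  ⟨fun i => P.equivFin.symm i, fun i => (P.equivFin.symm i).2, fun i j hij =>
    hP (P.equivFin.symm i).2 (P.equivFin.symm j).2
      fun h => hij (P.equivFin.symm.injective (Subtype.ext h))⟩

section

variable {V E : Type*} [DecidableEq V] {e₁ e₂ : E → V} {M N M' : Finset E} {q : List E}

theorem card_edgeEnds {e : E} (h : e₁ e ≠ e₂ e) : (edgeEnds e₁ e₂ e).card = 2 :=
  Finset.card_pair h

theorem edgeEnds_nonempty (e : E) : (edgeEnds e₁ e₂ e).Nonempty :=
  Finset.insert_nonempty _ _

theorem exists_edgeEnds_eq_pair {e : E} {u : V} (hu : u ∈ edgeEnds e₁ e₂ e) :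
    ∃ w, edgeEnds e₁ e₂ e = {u, w} := by
  simp only [edgeEnds, Finset.mem_insert, Finset.mem_singleton] at hu ⊢
  rcases hu with rfl | rfl
  · exact ⟨e₂ e, rfl⟩
  · exact ⟨e₁ e, Finset.pair_comm _ _⟩

theorem mem_matchedVerts {x : V} :
    x ∈ matchedVerts e₁ e₂ M ↔ ∃ g ∈ M, x ∈ edgeEnds e₁ e₂ g :=
  Finset.mem_biUnion

theorem mem_matchedVerts_erase {f : E} {x : V} (hx : x ∈ matchedVerts e₁ e₂ M)
    (hxf : x ∉ edgeEnds e₁ e₂ f) : x ∈ matchedVerts e₁ e₂ (M.erase f) := by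
  obtain ⟨g, hg, hxg⟩ := mem_matchedVerts.1 hx
  exact mem_matchedVerts.2 ⟨g, Finset.mem_erase.2 ⟨fun h => hxf (h ▸ hxg), hg⟩, hxg⟩

theorem matchedVerts_mono {M₀ : Finset E} (h : M₀ ⊆ M) :
    matchedVerts e₁ e₂ M₀ ⊆ matchedVerts e₁ e₂ M :=
  Finset.biUnion_subset_biUnion_of_subset_left _ h

namespace IsMatchingE

theorem erase (h : IsMatchingE e₁ e₂ M) (e : E) : IsMatchingE e₁ e₂ (M.erase e) :=
  ⟨fun g hg => h.1 g (Finset.mem_of_mem_erase hg),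
   fun a ha b hb => h.2 a (Finset.mem_of_mem_erase ha) b (Finset.mem_of_mem_erase hb)⟩

theorem notMem_matchedVerts_erase (h : IsMatchingE e₁ e₂ M) {e : E} {x : V} (he : e ∈ M)
    (hx : x ∈ edgeEnds e₁ e₂ e) : x ∉ matchedVerts e₁ e₂ (M.erase e) := fun hxM => by
  obtain ⟨g, hg, hxg⟩ := mem_matchedVerts.1 hxM
  exact Finset.disjoint_left.1
    (h.2 e he g (Finset.mem_of_mem_erase hg) (Finset.ne_of_mem_erase hg).symm) hx hxg

theorem eq_of_mem_edgeEnds (h : IsMatchingE e₁ e₂ M) {g g' : E} {x : V} (hg : g ∈ M)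
    (hg' : g' ∈ M) (hx : x ∈ edgeEnds e₁ e₂ g) (hx' : x ∈ edgeEnds e₁ e₂ g') : g = g' := by
  by_contra hne
  exact Finset.disjoint_left.1 (h.2 g hg g' hg' hne) hx hx'

theorem card_matchedVerts (h : IsMatchingE e₁ e₂ M) :
    (matchedVerts e₁ e₂ M).card = 2 * M.card := by
  rw [matchedVerts, Finset.card_biUnion h.2,
    Finset.sum_congr rfl fun e he => card_edgeEnds (h.1 e he), Finset.sum_const, smul_eq_mul,
    mul_comm]

end IsMatchingE

theorem isAltNMPath_iff_getElem : IsAltNMPath e₁ e₂ N M' q ↔ q ≠ [] ∧ q.length % 2 = 1 ∧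
    (∀ i (h : i < q.length), if i % 2 = 0 then q[i] ∈ N else q[i] ∈ M') ∧
    (∀ i (h : i + 1 < q.length), (edgeEnds e₁ e₂ q[i] ∩ edgeEnds e₁ e₂ q[i + 1]).card = 1) ∧
    ∀ i j (hi : i < q.length) (hj : j < q.length), i + 2 ≤ j →
      Disjoint (edgeEnds e₁ e₂ q[i]) (edgeEnds e₁ e₂ q[j]) :=
  Iff.rfl

namespace IsAltNMPath

theorem getElem_mem_right (hq : IsAltNMPath e₁ e₂ N M' q) {i : ℕ} (h : i < q.length)
    (hi : i % 2 = 1) : q[i] ∈ M' := by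
  simpa [hi] using hq.2.2.1 i h

theorem card_inter_succ (hq : IsAltNMPath e₁ e₂ N M' q) {i : ℕ} (h : i + 1 < q.length) :
    (edgeEnds e₁ e₂ q[i] ∩ edgeEnds e₁ e₂ q[i + 1]).card = 1 :=
  hq.2.2.2.1 i h

theorem disjoint_of_add_two_le (hq : IsAltNMPath e₁ e₂ N M' q) {i j : ℕ} (hij : i + 2 ≤ j)
    (hj : j < q.length) : Disjoint (edgeEnds e₁ e₂ q[i]) (edgeEnds e₁ e₂ q[j]) :=
  hq.2.2.2.2 i j (by omega) hj hij

theorem mem_union (hq : IsAltNMPath e₁ e₂ N M' q) {g : E} (hg : g ∈ q) : g ∈ N ∪ M' := by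
  obtain ⟨i, hi, rfl⟩ := List.getElem_of_mem hg
  have := hq.2.2.1 i hi
  split_ifs at this
  · exact Finset.mem_union_left _ this
  · exact Finset.mem_union_right _ this

theorem notMem_edgeEnds (hq : IsAltNMPath e₁ e₂ N M' q) {g : E} {x : V} (hg : g ∈ q)
    (hxN : x ∉ matchedVerts e₁ e₂ N) (hxM : x ∉ matchedVerts e₁ e₂ M') : x ∉ edgeEnds e₁ e₂ g :=
  fun hxg => (Finset.mem_union.1 (hq.mem_union hg)).elim
    (fun h => hxN (mem_matchedVerts.2 ⟨g, h, hxg⟩)) fun h => hxM (mem_matchedVerts.2 ⟨g, h, hxg⟩)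

theorem mono {N₀ M₀ : Finset E} (hq : IsAltNMPath e₁ e₂ N₀ M₀ q) (hN : N₀ ⊆ N) (hM : M₀ ⊆ M') :
    IsAltNMPath e₁ e₂ N M' q := by
  refine ⟨hq.1, hq.2.1, fun i h => ?_, hq.2.2.2⟩
  have := hq.2.2.1 i h
  split_ifs at this ⊢
  exacts [hN this, hM this]

theorem edge_ne (hN : IsMatchingE e₁ e₂ N) (hM : IsMatchingE e₁ e₂ M')
    (hq : IsAltNMPath e₁ e₂ N M' q) {g : E} (hg : g ∈ q) : e₁ g ≠ e₂ g := by
  rcases Finset.mem_union.1 (hq.mem_union hg) with h | h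
  exacts [hN.1 g h, hM.1 g h]

theorem nodup (hN : IsMatchingE e₁ e₂ N) (hM : IsMatchingE e₁ e₂ M')
    (hq : IsAltNMPath e₁ e₂ N M' q) : q.Nodup := by
  refine List.nodup_iff_injective_get.2 fun ⟨i, hi⟩ ⟨j, hj⟩ hij => ?_
  simp only [List.get_eq_getElem] at hij
  suffices ∀ i j (hi : i < q.length) (hj : j < q.length), i < j → q[i] ≠ q[j] by
    rcases lt_trichotomy i j with h | rfl | h
    exacts [absurd hij (this i j hi hj h), rfl, absurd hij.symm (this j i hj hi h)]
  intro i j hi hj hij heq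
  rcases Nat.lt_or_ge (i + 1) j with h | h
  · have hd := hq.disjoint_of_add_two_le h hj
    rw [heq, disjoint_self, Finset.bot_eq_empty] at hd
    exact (edgeEnds_nonempty _).ne_empty hd
  · obtain rfl : j = i + 1 := by omega
    have hc := hq.card_inter_succ hj
    rw [heq, Finset.inter_self, card_edgeEnds (hq.edge_ne hN hM (List.getElem_mem hj))] at hc
    omega

theorem mem_left_of_notMem_matchedVerts (hq : IsAltNMPath e₁ e₂ N M' q) {g : E} {x : V}
    (hg : g ∈ q) (hxg : x ∈ edgeEnds e₁ e₂ g) (hx : x ∉ matchedVerts e₁ e₂ M') : g ∈ N :=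
  (Finset.mem_union.1 (hq.mem_union hg)).resolve_right fun hgM =>
    hx (mem_matchedVerts.2 ⟨g, hgM, hxg⟩)

theorem eq_of_notMem_matchedVerts (hN : IsMatchingE e₁ e₂ N) (hq : IsAltNMPath e₁ e₂ N M' q)
    {g h : E} {x : V} (hg : g ∈ q) (hh : h ∈ q) (hxg : x ∈ edgeEnds e₁ e₂ g)
    (hxh : x ∈ edgeEnds e₁ e₂ h) (hx : x ∉ matchedVerts e₁ e₂ M') : g = h :=
  hN.eq_of_mem_edgeEnds (hq.mem_left_of_notMem_matchedVerts hg hxg hx)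
    (hq.mem_left_of_notMem_matchedVerts hh hxh hx) hxg hxh

theorem reverse (hq : IsAltNMPath e₁ e₂ N M' q) : IsAltNMPath e₁ e₂ N M' q.reverse := by
  obtain ⟨hne, hodd, hmem, hinter, hdisj⟩ := isAltNMPath_iff_getElem.1 hq
  refine isAltNMPath_iff_getElem.2 ⟨by simpa using hne, by simpa using hodd, fun i h => ?_,
    fun i h => ?_, fun i j hi hj hij => ?_⟩ <;> simp only [List.getElem_reverse]
  · rw [List.length_reverse] at h
    have := hmem (q.length - 1 - i) (by omega)
    rwa [show (q.length - 1 - i) % 2 = i % 2 by omega] at this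
  · rw [List.length_reverse] at h
    rw [Finset.inter_comm]
    have := hinter (q.length - 1 - (i + 1)) (by omega)
    simpa only [show q.length - 1 - (i + 1) + 1 = q.length - 1 - i by omega] using this
  · rw [List.length_reverse] at hi hj
    exact (hdisj _ _ (by omega) (by omega) (by omega)).symm

theorem edgeEnds_subset_union (hq : IsAltNMPath e₁ e₂ N M' q) {i : ℕ} (h : i + 2 < q.length)
    (hne : e₁ q[i + 1] ≠ e₂ q[i + 1]) :
    edgeEnds e₁ e₂ q[i + 1] ⊆ edgeEnds e₁ e₂ q[i] ∪ edgeEnds e₁ e₂ q[i + 2] := by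
  set A := edgeEnds e₁ e₂ q[i]
  set B := edgeEnds e₁ e₂ q[i + 1]
  set C := edgeEnds e₁ e₂ q[i + 2]
  have hAC : Disjoint A C := hq.disjoint_of_add_two_le le_rfl h
  have hsub : A ∩ B ∪ B ∩ C ⊆ B :=
    Finset.union_subset Finset.inter_subset_right Finset.inter_subset_left
  have hcard : B.card ≤ (A ∩ B ∪ B ∩ C).card := by
    rw [Finset.card_union_of_disjoint
        (Finset.disjoint_of_subset_left Finset.inter_subset_left
          (Finset.disjoint_of_subset_right Finset.inter_subset_right hAC)),
      hq.card_inter_succ (by omega), hq.card_inter_succ h, card_edgeEnds hne]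
  rw [← Finset.eq_of_subset_of_card_le hsub hcard]
  exact Finset.union_subset_union Finset.inter_subset_left Finset.inter_subset_right

theorem head_or_getLast_of_notMem_matchedVerts (hN : IsMatchingE e₁ e₂ N)
    (hM : IsMatchingE e₁ e₂ M') (hq : IsAltNMPath e₁ e₂ N M' q) {g : E} {x : V} (hg : g ∈ q)
    (hxg : x ∈ edgeEnds e₁ e₂ g) (hx : x ∉ matchedVerts e₁ e₂ M') :
    q.head? = some g ∨ q.getLast? = some g := by
  obtain ⟨t, ht, rfl⟩ := List.getElem_of_mem hg
  have hright : ∀ j (hj : j < q.length), j % 2 = 1 → x ∉ edgeEnds e₁ e₂ q[j] := fun j hj hodd hxj =>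
    hx (mem_matchedVerts.2 ⟨_, hq.getElem_mem_right hj hodd, hxj⟩)
  have heven : t % 2 = 0 := by
    by_contra hodd
    exact hright t ht (by omega) hxg
  rcases Nat.eq_zero_or_pos t with rfl | ht0
  · exact Or.inl (by simp [List.head?_eq_getElem?, ht])
  rcases Nat.lt_or_ge (t + 1) q.length with htl | htl
  · obtain ⟨i, rfl⟩ : ∃ i, t = i + 1 := ⟨t - 1, by omega⟩
    have := hq.edgeEnds_subset_union htl (hq.edge_ne hN hM (List.getElem_mem ht)) hxg
    rcases Finset.mem_union.1 this with h | h
    exacts [(hright i _ (by omega) h).elim, (hright (i + 2) htl (by omega) h).elim]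
  · exact Or.inr (by simp [List.getLast?_eq_getElem?, show t = q.length - 1 by omega])

end IsAltNMPath

namespace FreeEndpoints

theorem reverse (hq : FreeEndpoints e₁ e₂ M' q) : FreeEndpoints e₁ e₂ M' q.reverse :=
  ⟨fun f hf => hq.2.1 f (by rwa [List.head?_reverse] at hf),
   fun f hf => hq.1 f (by rwa [List.getLast?_reverse] at hf),
   fun f hf => hq.2.2 f (List.reverse_eq_cons_iff.1 hf)⟩

theorem of_matchedVerts (hq : FreeEndpoints e₁ e₂ M q)
    (hMM' : ∀ g ∈ q, edgeEnds e₁ e₂ g ∩ matchedVerts e₁ e₂ M' ⊆ matchedVerts e₁ e₂ M) :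
    FreeEndpoints e₁ e₂ M' q := by
  have key : ∀ g ∈ q, ∀ x ∈ edgeEnds e₁ e₂ g, x ∉ matchedVerts e₁ e₂ M →
      x ∉ matchedVerts e₁ e₂ M' := fun g hg x hxg hx hx' =>
    hx (hMM' g hg (Finset.mem_inter.2 ⟨hxg, hx'⟩))
  refine ⟨fun f hf => ?_, fun f hf => ?_, fun f hf x hx => ?_⟩
  · obtain ⟨x, hxf, hx⟩ := hq.1 f hf
    exact ⟨x, hxf, key f (List.mem_of_mem_head? hf) x hxf hx⟩
  · obtain ⟨x, hxf, hx⟩ := hq.2.1 f hf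
    exact ⟨x, hxf, key f (List.mem_of_mem_getLast? hf) x hxf hx⟩
  · exact key f (by simp [hf]) x hx (hq.2.2 f hf x hx)

end FreeEndpoints

theorem IsAltNMPath.cons_cons {e f g : E} {p : List E} (hq : IsAltNMPath e₁ e₂ N M' (g :: p))
    (he : e ∈ N) (hf : f ∈ M') (hef : (edgeEnds e₁ e₂ e ∩ edgeEnds e₁ e₂ f).card = 1)
    (hfg : (edgeEnds e₁ e₂ f ∩ edgeEnds e₁ e₂ g).card = 1)
    (hfp : ∀ h ∈ p, Disjoint (edgeEnds e₁ e₂ f) (edgeEnds e₁ e₂ h))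
    (heq : ∀ h ∈ g :: p, Disjoint (edgeEnds e₁ e₂ e) (edgeEnds e₁ e₂ h)) :
    IsAltNMPath e₁ e₂ N M' (e :: f :: g :: p) := by
  obtain ⟨-, hodd, hmem, hinter, hdisj⟩ := isAltNMPath_iff_getElem.1 hq
  simp only [List.length_cons] at hodd hmem hinter hdisj
  refine isAltNMPath_iff_getElem.2 ⟨List.cons_ne_nil _ _, by simp; omega, fun i h => ?_,
    fun i h => ?_, fun i j hi hj hij => ?_⟩
  · rcases i with _ | _ | i
    · simpa using he
    · simpa using hf
    · simpa [show (i + 1 + 1) % 2 = i % 2 by omega] using hmem i (by simpa using h)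
  · rcases i with _ | _ | i
    exacts [hef, hfg, hinter i (by simpa using h)]
  · obtain ⟨j, rfl⟩ : ∃ j', j = j' + 2 := ⟨j - 2, by omega⟩
    rcases i with _ | _ | i
    · exact heq _ (List.getElem_mem _)
    · obtain ⟨j, rfl⟩ : ∃ j', j = j' + 1 := ⟨j - 1, by omega⟩
      exact hfp _ (List.getElem_mem _)
    · exact hdisj i j (by simpa using hi) (by simpa using hj) (by omega)

theorem FreeEndpoints.cons_cons {e f g : E} {p : List E} {v : V} (hv : v ∈ edgeEnds e₁ e₂ e)
    (hvM : v ∉ matchedVerts e₁ e₂ M')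
    (hlast : ∃ x ∈ edgeEnds e₁ e₂ ((g :: p).getLast (List.cons_ne_nil _ _)),
      x ∉ matchedVerts e₁ e₂ M') :
    FreeEndpoints e₁ e₂ M' (e :: f :: g :: p) := by
  refine ⟨fun h hh => ?_, fun h hh => ?_, fun h hh => by simp at hh⟩
  · obtain rfl : e = h := by simpa using hh
    exact ⟨v, hv, hvM⟩
  · rw [List.getLast?_eq_some_getLast (List.cons_ne_nil _ _), List.getLast_cons_cons,
      List.getLast_cons_cons, Option.some_inj] at hh
    exact hh ▸ hlast

theorem IsAltNMPath.extend (hN : IsMatchingE e₁ e₂ N) (hM : IsMatchingE e₁ e₂ M') {e f g : E}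
    {p : List E} {u v w : V} (he : e ∈ N) (hf : f ∈ M') (heq : edgeEnds e₁ e₂ e = {u, v})
    (hfeq : edgeEnds e₁ e₂ f = {u, w}) (hvM : v ∉ matchedVerts e₁ e₂ M')
    (hwM : w ∉ matchedVerts e₁ e₂ (M'.erase f))
    (hq : IsAltNMPath e₁ e₂ (N.erase e) (M'.erase f) (g :: p))
    (hqf : FreeEndpoints e₁ e₂ (M'.erase f) (g :: p))
    (hu : ∀ h ∈ g :: p, u ∉ edgeEnds e₁ e₂ h) (hv : ∀ h ∈ g :: p, v ∉ edgeEnds e₁ e₂ h)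
    (hw : w ∈ edgeEnds e₁ e₂ g) :
    IsAltNMPath e₁ e₂ N M' (e :: f :: g :: p) ∧ FreeEndpoints e₁ e₂ M' (e :: f :: g :: p) := by
  have hvf : v ∉ edgeEnds e₁ e₂ f := fun h => hvM (mem_matchedVerts.2 ⟨f, hf, h⟩)
  have hwp : ∀ h ∈ p, w ∉ edgeEnds e₁ e₂ h := fun h hh hwh => by
    have hgh := hq.eq_of_notMem_matchedVerts (hN.erase e) List.mem_cons_self
      (List.mem_cons_of_mem g hh) hw hwh hwM
    exact (List.nodup_cons.1 (hq.nodup (hN.erase e) (hM.erase f))).1 (hgh ▸ hh)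
  have hlast : ∃ x ∈ edgeEnds e₁ e₂ ((g :: p).getLast (List.cons_ne_nil _ _)),
      x ∉ matchedVerts e₁ e₂ M' := by
    obtain ⟨x, hx, hxw, hxM⟩ : ∃ x ∈ edgeEnds e₁ e₂ ((g :: p).getLast (List.cons_ne_nil _ _)),
        x ≠ w ∧ x ∉ matchedVerts e₁ e₂ (M'.erase f) := by
      rcases p.eq_nil_or_concat' with rfl | ⟨p', h', rfl⟩
      · obtain ⟨x, hx, hxw⟩ := Finset.exists_mem_ne (s := edgeEnds e₁ e₂ g)
          (by rw [card_edgeEnds (hq.edge_ne (hN.erase e) (hM.erase f) List.mem_cons_self)]; omega) w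
        exact ⟨x, hx, hxw, hqf.2.2 g rfl x hx⟩
      · obtain ⟨x, hx, hxM⟩ := hqf.2.1 _ (List.getLast?_eq_some_getLast (List.cons_ne_nil _ _))
        refine ⟨x, hx, fun h => hwp h' (by simp) (by simp_all), hxM⟩
    refine ⟨x, hx, fun h => hxM (mem_matchedVerts_erase h ?_)⟩
    rw [hfeq, Finset.mem_insert, Finset.mem_singleton, not_or]
    exact ⟨fun h => hu _ (List.getLast_mem _) (h ▸ hx), hxw⟩
  refine ⟨(hq.mono (Finset.erase_subset _ _) (Finset.erase_subset _ _)).cons_cons he hf ?_ ?_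
    ?_ ?_, FreeEndpoints.cons_cons (by simp [heq]) hvM hlast⟩
  · rw [heq, hfeq, Finset.insert_inter_of_mem (by simp),
      Finset.singleton_inter_of_notMem (hfeq ▸ hvf)]
    rfl
  · rw [hfeq, Finset.insert_inter_of_notMem (hu g List.mem_cons_self),
      Finset.singleton_inter_of_mem hw]
    rfl
  · exact fun h hh => by
      simpa [hfeq] using ⟨hu h (List.mem_cons_of_mem g hh), hwp h hh⟩
  · exact fun h hh => by simpa [heq] using ⟨hu h hh, hv h hh⟩

theorem IsAltNMPath.exists_extend (hN : IsMatchingE e₁ e₂ N) (hM : IsMatchingE e₁ e₂ M')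
    {e f g : E} {u v w : V} (he : e ∈ N) (hf : f ∈ M')
    (heq : edgeEnds e₁ e₂ e = {u, v}) (hfeq : edgeEnds e₁ e₂ f = {u, w})
    (hvM : v ∉ matchedVerts e₁ e₂ M') (hq : IsAltNMPath e₁ e₂ (N.erase e) (M'.erase f) q)
    (hqf : FreeEndpoints e₁ e₂ (M'.erase f) q) (hu : ∀ h ∈ q, u ∉ edgeEnds e₁ e₂ h)
    (hv : ∀ h ∈ q, v ∉ edgeEnds e₁ e₂ h) (hg : g ∈ q) (hw : w ∈ edgeEnds e₁ e₂ g) :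
    ∃ r, IsAltNMPath e₁ e₂ N M' r ∧ FreeEndpoints e₁ e₂ M' r ∧ ∀ h ∈ r, h ∈ q ∨ h = e ∨ h = f := by
  have hwM := hM.notMem_matchedVerts_erase hf (x := w) (by simp [hfeq])
  obtain ⟨q', hq', hq'f, hmem, hhead⟩ : ∃ q', IsAltNMPath e₁ e₂ (N.erase e) (M'.erase f) q' ∧
      FreeEndpoints e₁ e₂ (M'.erase f) q' ∧ (∀ h, h ∈ q' ↔ h ∈ q) ∧ q'.head? = some g := by
    rcases hq.head_or_getLast_of_notMem_matchedVerts (hN.erase e) (hM.erase f) hg hw hwM with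
      h | h
    · exact ⟨q, hq, hqf, fun _ => Iff.rfl, h⟩
    · exact ⟨q.reverse, hq.reverse, hqf.reverse, fun _ => List.mem_reverse,
        by rwa [List.head?_reverse]⟩
  obtain ⟨p, rfl⟩ := List.head?_eq_some_iff.1 hhead
  obtain ⟨hr, hrf⟩ := hq'.extend hN hM he hf heq hfeq hvM hwM hq'f
    (fun h hh => hu h ((hmem h).1 hh)) (fun h hh => hv h ((hmem h).1 hh)) hw
  refine ⟨_, hr, hrf, fun h hh => ?_⟩
  rcases List.mem_cons.1 hh with rfl | hh
  · exact Or.inr (Or.inl rfl)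
  rcases List.mem_cons.1 hh with rfl | hh
  exacts [Or.inr (Or.inr rfl), Or.inl ((hmem h).1 hh)]

def VertexDisjoint (e₁ e₂ : E → V) (p q : List E) : Prop :=
  ∀ f ∈ p, ∀ g ∈ q, Disjoint (edgeEnds e₁ e₂ f) (edgeEnds e₁ e₂ g)

theorem VertexDisjoint.symm {p q : List E} (h : VertexDisjoint e₁ e₂ p q) :
    VertexDisjoint e₁ e₂ q p :=
  fun f hf g hg => (h g hg f hf).symm

theorem VertexDisjoint.disjoint_toFinset {p q : List E} (h : VertexDisjoint e₁ e₂ p q) :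
    Disjoint p.toFinset q.toFinset :=
  Finset.disjoint_left.2 fun g hp hq =>
    (edgeEnds_nonempty g).ne_empty (disjoint_self.1 (h g (List.mem_toFinset.1 hp) g
      (List.mem_toFinset.1 hq)))

structure IsAltPathPacking (e₁ e₂ : E → V) (N M' : Finset E) (P : Finset (List E)) : Prop where
  isAlt : ∀ p ∈ P, IsAltNMPath e₁ e₂ N M' p
  free : ∀ p ∈ P, FreeEndpoints e₁ e₂ M' p
  pairwise : (P : Set (List E)).Pairwise (VertexDisjoint e₁ e₂)

namespace IsAltPathPacking

variable {P : Finset (List E)}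

theorem empty : IsAltPathPacking e₁ e₂ N M' ∅ :=
  ⟨by simp, by simp, by simp⟩

theorem subset {Q : Finset (List E)} (hP : IsAltPathPacking e₁ e₂ N M' P) (hQ : Q ⊆ P) :
    IsAltPathPacking e₁ e₂ N M' Q :=
  ⟨fun p hp => hP.isAlt p (hQ hp), fun p hp => hP.free p (hQ hp),
    hP.pairwise.mono (Finset.coe_subset.2 hQ)⟩

theorem mono {N₀ M₀ : Finset E} (hP : IsAltPathPacking e₁ e₂ N₀ M₀ P) (hN : N₀ ⊆ N)
    (hM : M₀ ⊆ M')
    (hMM' : ∀ p ∈ P, ∀ g ∈ p, edgeEnds e₁ e₂ g ∩ matchedVerts e₁ e₂ M' ⊆ matchedVerts e₁ e₂ M₀) :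
    IsAltPathPacking e₁ e₂ N M' P :=
  ⟨fun p hp => (hP.isAlt p hp).mono hN hM, fun p hp => (hP.free p hp).of_matchedVerts (hMM' p hp),
    hP.pairwise⟩

theorem insert {r : List E} (hP : IsAltPathPacking e₁ e₂ N M' P) (hr : IsAltNMPath e₁ e₂ N M' r)
    (hrf : FreeEndpoints e₁ e₂ M' r) (hrP : ∀ p ∈ P, VertexDisjoint e₁ e₂ r p) :
    IsAltPathPacking e₁ e₂ N M' (insert r P) ∧ (insert r P).card = P.card + 1 := by
  refine ⟨⟨?_, ?_, ?_⟩, Finset.card_insert_of_notMem fun h => hr.1 ?_⟩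
  · simpa [Finset.forall_mem_insert] using ⟨hr, hP.isAlt⟩
  · simpa [Finset.forall_mem_insert] using ⟨hrf, hP.free⟩
  · rw [Finset.coe_insert, Set.pairwise_insert]
    exact ⟨hP.pairwise, fun p hp _ => ⟨hrP p hp, (hrP p hp).symm⟩⟩
  · simpa using (hrP r h).disjoint_toFinset

end IsAltPathPacking

theorem isAltNMPath_singleton {e : E} (he : e ∈ N) : IsAltNMPath e₁ e₂ N M' [e] := by
  refine ⟨List.cons_ne_nil _ _, rfl, fun i h => ?_, fun i h => by simp at h,
    fun i j hi hj hij => by simp at hi hj; omega⟩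
  obtain rfl : i = 0 := by simpa using h
  simpa using he

theorem freeEndpoints_singleton {e : E} (he : ∀ x ∈ edgeEnds e₁ e₂ e, x ∉ matchedVerts e₁ e₂ M') :
    FreeEndpoints e₁ e₂ M' [e] := by
  refine ⟨fun f hf => ?_, fun f hf => ?_, fun f hf => ?_⟩ <;>
    obtain rfl : e = f := by simpa using hf
  all_goals first | exact he | exact ⟨e₁ e, by simp [edgeEnds], he _ (by simp [edgeEnds])⟩

theorem IsAltPathPacking.exists_of_erase_erase (hN : IsMatchingE e₁ e₂ N)
    (hM : IsMatchingE e₁ e₂ M') {e f : E} {u v w : V} {P : Finset (List E)} (he : e ∈ N)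
    (hf : f ∈ M') (heq : edgeEnds e₁ e₂ e = {u, v}) (hfeq : edgeEnds e₁ e₂ f = {u, w})
    (hvM : v ∉ matchedVerts e₁ e₂ M') (hP : IsAltPathPacking e₁ e₂ (N.erase e) (M'.erase f) P) :
    ∃ Q, IsAltPathPacking e₁ e₂ N M' Q ∧ P.card ≤ Q.card := by
  have hu : ∀ q ∈ P, ∀ h ∈ q, u ∉ edgeEnds e₁ e₂ h := fun q hq h hh =>
    (hP.isAlt q hq).notMem_edgeEnds hh (hN.notMem_matchedVerts_erase he (by simp [heq]))
      (hM.notMem_matchedVerts_erase hf (by simp [hfeq]))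
  have hv : ∀ q ∈ P, ∀ h ∈ q, v ∉ edgeEnds e₁ e₂ h := fun q hq h hh =>
    (hP.isAlt q hq).notMem_edgeEnds hh (hN.notMem_matchedVerts_erase he (by simp [heq]))
      fun hv => hvM (matchedVerts_mono (Finset.erase_subset _ _) hv)
  have hupgrade : ∀ Q ⊆ P, (∀ q ∈ Q, ∀ h ∈ q, w ∉ edgeEnds e₁ e₂ h) →
      IsAltPathPacking e₁ e₂ N M' Q := fun Q hQ hw =>
    (hP.subset hQ).mono (Finset.erase_subset _ _) (Finset.erase_subset _ _)
      fun q hq h hh x hx => by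
        refine mem_matchedVerts_erase (Finset.mem_inter.1 hx).2 ?_
        rw [hfeq, Finset.mem_insert, Finset.mem_singleton]
        rintro (rfl | rfl)
        exacts [hu q (hQ hq) h hh (Finset.mem_inter.1 hx).1, hw q hq h hh (Finset.mem_inter.1 hx).1]
  by_cases hw : ∃ q ∈ P, ∃ g ∈ q, w ∈ edgeEnds e₁ e₂ g
  · obtain ⟨q, hq, g, hg, hwg⟩ := hw
    have hwq : ∀ q' ∈ P.erase q, ∀ h ∈ q', w ∉ edgeEnds e₁ e₂ h := fun q' hq' h hh hwh =>
      Finset.disjoint_left.1 (hP.pairwise (Finset.mem_of_mem_erase hq') hq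
        (Finset.ne_of_mem_erase hq') h hh g hg) hwh hwg
    obtain ⟨r, hr, hrf, hrq⟩ := (hP.isAlt q hq).exists_extend hN hM he hf heq hfeq hvM
      (hP.free q hq) (hu q hq) (hv q hq) hg hwg
    have hrP : ∀ q' ∈ P.erase q, VertexDisjoint e₁ e₂ r q' := fun q' hq' h hh h' hh' => by
      rcases hrq h hh with hh | rfl | rfl
      · exact hP.pairwise hq (Finset.mem_of_mem_erase hq') (Finset.ne_of_mem_erase hq').symm
          h hh h' hh'
      · have hq'P := Finset.mem_of_mem_erase hq'
        simpa [heq] using ⟨hu q' hq'P h' hh', hv q' hq'P h' hh'⟩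
      · simpa [hfeq] using ⟨hu q' (Finset.mem_of_mem_erase hq') h' hh', hwq q' hq' h' hh'⟩
    obtain ⟨hQ, hcard⟩ := (hupgrade _ (Finset.erase_subset _ _) hwq).insert hr hrf hrP
    refine ⟨_, hQ, ?_⟩
    rw [hcard, Finset.card_erase_of_mem hq]
    omega
  · push Not at hw
    exact ⟨P, hupgrade P subset_rfl hw, le_rfl⟩

theorem exists_isAltPathPacking (hN : IsMatchingE e₁ e₂ N) (hM : IsMatchingE e₁ e₂ M') :
    ∃ P, IsAltPathPacking e₁ e₂ N M' P ∧ N.card ≤ M'.card + P.card := by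
  induction N using Finset.strongInduction generalizing M' with
  | H N ih =>
  by_cases hcov : matchedVerts e₁ e₂ N ⊆ matchedVerts e₁ e₂ M'
  · refine ⟨∅, IsAltPathPacking.empty, ?_⟩
    have := Finset.card_le_card hcov
    rw [hN.card_matchedVerts, hM.card_matchedVerts] at this
    omega
  obtain ⟨v, hvN, hvM⟩ := Finset.not_subset.1 hcov
  obtain ⟨e, he, hve⟩ := mem_matchedVerts.1 hvN
  obtain ⟨u, heq⟩ := exists_edgeEnds_eq_pair hve
  rw [Finset.pair_comm] at heq
  have hNe := Finset.card_erase_of_mem he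
  by_cases huM : u ∈ matchedVerts e₁ e₂ M'
  · obtain ⟨f, hf, huf⟩ := mem_matchedVerts.1 huM
    obtain ⟨w, hfeq⟩ := exists_edgeEnds_eq_pair huf
    obtain ⟨P, hP, hcard⟩ := ih _ (Finset.erase_ssubset he) (hN.erase e) (hM.erase f)
    obtain ⟨Q, hQ, hPQ⟩ := hP.exists_of_erase_erase hN hM he hf heq hfeq hvM
    have hMf := Finset.card_erase_of_mem hf
    have := Finset.card_pos.2 ⟨f, hf⟩
    exact ⟨Q, hQ, by omega⟩
  · obtain ⟨P, hP, hcard⟩ := ih _ (Finset.erase_ssubset he) (hN.erase e) hM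
    have hfree : ∀ x ∈ edgeEnds e₁ e₂ e, x ∉ matchedVerts e₁ e₂ M' := by
      simp [heq, hvM, huM]
    have heP : ∀ q ∈ P, VertexDisjoint e₁ e₂ [e] q := fun q hq h hh g hg => by
      obtain rfl : h = e := by simpa using hh
      exact Finset.disjoint_left.2 fun x hx =>
        (hP.isAlt q hq).notMem_edgeEnds hg (hN.notMem_matchedVerts_erase he hx) (hfree x hx)
    obtain ⟨hQ, hQcard⟩ := (hP.mono (Finset.erase_subset _ _) subset_rfl
      fun _ _ _ _ => Finset.inter_subset_right).insert (isAltNMPath_singleton he)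
      (freeEndpoints_singleton hfree) heP
    exact ⟨_, hQ, by omega⟩

theorem IsAltNMPath.length_le_card_inter (hN : IsMatchingE e₁ e₂ N) (hM : IsMatchingE e₁ e₂ M')
    {q : List E} (hq : IsAltNMPath e₁ e₂ N M' q) : q.length ≤ 2 * (q.toFinset ∩ M').card + 1 := by
  have hle : (q.length - 1) / 2 ≤ (q.toFinset ∩ M').card := by
    simpa using Finset.card_le_card_of_injOn (s := Finset.univ) (t := q.toFinset ∩ M')
      (fun j : Fin ((q.length - 1) / 2) => q[2 * j.1 + 1]'(by omega))
      (fun j _ => Finset.mem_inter.2 ⟨List.mem_toFinset.2 (List.getElem_mem _),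
        hq.getElem_mem_right _ (by omega)⟩)
      (fun i _ j _ hij => Fin.ext (by simpa using (hq.nodup hN hM).getElem_inj_iff.1 hij))
  have hodd := hq.2.1
  omega

theorem IsAltPathPacking.card_filter_length_lt_mul_le (hN : IsMatchingE e₁ e₂ N)
    (hM : IsMatchingE e₁ e₂ M') {P : Finset (List E)} (hP : IsAltPathPacking e₁ e₂ N M' P)
    (L : ℕ) : (P.filter fun p => L < p.length).card * L ≤ 2 * M'.card := by
  set S := P.filter fun p => L < p.length
  have hdisj : (S : Set (List E)).PairwiseDisjoint fun p => p.toFinset ∩ M' :=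
    fun p hp q hq hpq => Finset.disjoint_of_subset_left Finset.inter_subset_left
      (Finset.disjoint_of_subset_right Finset.inter_subset_left
        (hP.pairwise (Finset.mem_filter.1 hp).1 (Finset.mem_filter.1 hq).1 hpq).disjoint_toFinset)
  calc S.card * L ≤ ∑ p ∈ S, 2 * (p.toFinset ∩ M').card := by
        rw [← smul_eq_mul]
        exact Finset.card_nsmul_le_sum S _ L fun p hp => by
          have := ((hP.isAlt p (Finset.mem_filter.1 hp).1).length_le_card_inter hN hM)
          have := (Finset.mem_filter.1 hp).2
          omega
    _ = 2 * (S.biUnion fun p => p.toFinset ∩ M').card := by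
        rw [Finset.card_biUnion hdisj, Finset.mul_sum]
    _ ≤ 2 * M'.card := by
        gcongr
        exact Finset.biUnion_subset.2 fun _ _ => Finset.inter_subset_right

theorem IsAltPathPacking.card_sub_le_card_filter_length_le (hN : IsMatchingE e₁ e₂ N)
    (hM : IsMatchingE e₁ e₂ M') {P : Finset (List E)} (hP : IsAltPathPacking e₁ e₂ N M' P)
    {L : ℕ} (hL : 2 < L) :
    (P.card : ℝ) - 2 * M'.card / (L - 2) ≤ (P.filter fun p => p.length ≤ L).card := by
  set S := P.filter fun p => L < p.length
  have hsplit : (P.filter fun p => p.length ≤ L).card + S.card = P.card := by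
    simpa only [not_le] using Finset.card_filter_add_card_filter_not (s := P) fun p => p.length ≤ L
  have hlong : (S.card : ℝ) * L ≤ 2 * M'.card := by
    exact_mod_cast hP.card_filter_length_lt_mul_le hN hM L
  have hL2 : (0 : ℝ) < L - 2 := by
    have : (2 : ℝ) < L := by exact_mod_cast hL
    linarith
  have hS : (S.card : ℝ) ≤ 2 * M'.card / (L - 2) := by
    rw [le_div_iff₀ hL2]
    nlinarith
  have : (P.card : ℝ) = (P.filter fun p => p.length ≤ L).card + S.card := by
    exact_mod_cast hsplit.symm
  linarith

end

theorem stmt_15_general {V E : Type*} [DecidableEq V]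
    (e₁ e₂ : E → V) (N M' : Finset E) (s : ℕ)
    (hN : IsMatchingE e₁ e₂ N) (hM' : IsMatchingE e₁ e₂ M')
    (hs : M'.card + s ≤ N.card) :
    (∃ (k : ℕ) (paths : Fin k → List E), s ≤ k ∧
      (∀ i, IsAltNMPath e₁ e₂ N M' (paths i) ∧ FreeEndpoints e₁ e₂ M' (paths i)) ∧
      (∀ i j, i ≠ j → ∀ f ∈ paths i, ∀ g ∈ paths j,
        Disjoint (edgeEnds e₁ e₂ f) (edgeEnds e₁ e₂ g))) ∧
    ∀ L : ℕ, 2 < L →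
      ∃ (k : ℕ) (paths : Fin k → List E),
        (s : ℝ) - 2 * (M'.card : ℝ) / ((L : ℝ) - 2) ≤ (k : ℝ) ∧
        (∀ i, IsAltNMPath e₁ e₂ N M' (paths i) ∧ FreeEndpoints e₁ e₂ M' (paths i) ∧
          (paths i).length ≤ L) ∧
        (∀ i j, i ≠ j → ∀ f ∈ paths i, ∀ g ∈ paths j,
          Disjoint (edgeEnds e₁ e₂ f) (edgeEnds e₁ e₂ g)) := by
  obtain ⟨P, hP, hcard⟩ := exists_isAltPathPacking hN hM'
  refine ⟨?_, fun L hL => ?_⟩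
  · obtain ⟨paths, hmem, hdisj⟩ := Finset.exists_fin_pairwise hP.pairwise
    exact ⟨P.card, paths, by omega, fun i => ⟨hP.isAlt _ (hmem i), hP.free _ (hmem i)⟩, hdisj⟩
  set T := P.filter fun p => p.length ≤ L
  obtain ⟨paths, hmem, hdisj⟩ :=
    Finset.exists_fin_pairwise (hP.subset (Finset.filter_subset (fun p => p.length ≤ L) P)).pairwise
  refine ⟨T.card, paths, ?_, fun i => ?_, hdisj⟩
  · have hsP : (s : ℝ) ≤ P.card := by exact_mod_cast (by omega : s ≤ P.card)
    linarith [hP.card_sub_le_card_filter_length_le hN hM' hL]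
  · obtain ⟨hiP, hiL⟩ := Finset.mem_filter.1 (hmem i)
    exact ⟨hP.isAlt _ hiP, hP.free _ hiP, hiL⟩

/-- if `N` and `M'` are matchings with `|N| ≥ |M'| + s`, their union
contains at least `s` vertex-disjoint `N-M'-⋯-M'-N` alternating paths with both
endpoints uncovered by `M'`; moreover, for every `L > 2`, at least
`s - 2|M'|/(L-2)` of them can be taken of length at most `L`. -/
theorem stmt_15 {V E : Type*} [Fintype V] [DecidableEq V] [Fintype E]
    (e₁ e₂ : E → V) (N M' : Finset E) (s : ℕ)
    (hN : IsMatchingE e₁ e₂ N) (hM' : IsMatchingE e₁ e₂ M')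
    (hs : M'.card + s ≤ N.card) :
    (∃ (k : ℕ) (paths : Fin k → List E), s ≤ k ∧
      (∀ i, IsAltNMPath e₁ e₂ N M' (paths i) ∧ FreeEndpoints e₁ e₂ M' (paths i)) ∧
      (∀ i j, i ≠ j → ∀ f ∈ paths i, ∀ g ∈ paths j,
        Disjoint (edgeEnds e₁ e₂ f) (edgeEnds e₁ e₂ g))) ∧
    ∀ L : ℕ, 2 < L →
      ∃ (k : ℕ) (paths : Fin k → List E),
        (s : ℝ) - 2 * (M'.card : ℝ) / ((L : ℝ) - 2) ≤ (k : ℝ) ∧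
        (∀ i, IsAltNMPath e₁ e₂ N M' (paths i) ∧ FreeEndpoints e₁ e₂ M' (paths i) ∧
          (paths i).length ≤ L) ∧
        (∀ i j, i ≠ j → ∀ f ∈ paths i, ∀ g ∈ paths j,
          Disjoint (edgeEnds e₁ e₂ f) (edgeEnds e₁ e₂ g)) :=
  stmt_15_general e₁ e₂ N M' s hN hM' hs
end

section
/- Let d \geq 2 and n > 10 d^3 \log d with d dividing n-1. Then there exists an n-edge-coloured multigraph G in which each colour class is a disjoint union of non-trivial cliques spanning at least (2 + 1/d)(n-1) vertices, the maximum edge multiplicity of G is at most n/(2d) + O(n/d^2), and G contains no matching of size n. -/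
open Finset
open scoped Classical

/-!
The colour classes of `H` are chosen deterministically on `ZMod (2d + 1)`: colour `c` has centre
`i = c mod (2d + 1)` and width `j = c mod d + 1`, and its cliques are the triangle `{i, i ± j}` and
the pairs `{i ± a}`, `a ≠ j`. Distinct vertices `x, y` share a clique only if `x + y = 2i`, which
fixes `c mod (2d + 1)`, or if one of them is the centre and `j` is their distance, which by the
Chinese remainder theorem fixes `c mod d(2d + 1)`. So the pair `x, y` carries at most
`n/(2d + 1) + 2n/(d(2d + 1)) + 3` edges. In `(n - 1)/d` disjoint copies of `H` every colour class
spans all `(2 + 1/d)(n - 1)` vertices, while a matching has at most `d` edges in each copy of odd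
order `2d + 1`, hence at most `n - 1` edges.
-/

section Multigraph

variable {V C E : Type*}

def edgeMult [Fintype E] [DecidableEq V] (e₁ e₂ : E → V) (u v : V) : ℕ :=
  #{e | (e₁ e = u ∧ e₂ e = v) ∨ (e₁ e = v ∧ e₂ e = u)}

lemma adjOfColour_comp_equiv {E' : Type*} (e₁ e₂ : E → V) (col : E → C) (τ : E' ≃ E) :
    adjOfColour (e₁ ∘ τ) (e₂ ∘ τ) (col ∘ τ) = adjOfColour e₁ e₂ col := by
  ext c u v
  simp only [adjOfColour, Function.comp_apply, τ.exists_congr_left, Equiv.apply_symm_apply]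

lemma edgeMult_comp_equiv {E' : Type*} [Fintype E] [Fintype E'] [DecidableEq V]
    (e₁ e₂ : E → V) (τ : E' ≃ E) (u v : V) :
    edgeMult (e₁ ∘ τ) (e₂ ∘ τ) u v = edgeMult e₁ e₂ u v := by
  unfold edgeMult
  rw [← Finset.card_map τ.toEmbedding, Finset.map_filter, Finset.map_univ_equiv]
  simp

lemma isCliqueUnion_of_adjOfColour_iff {κ : Type*} {e₁ e₂ : E → V} {col : E → C} {c : C}
    (g : V → κ) (h : ∀ u v, adjOfColour e₁ e₂ col c u v ↔ u ≠ v ∧ g u = g v) :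
    IsCliqueUnion e₁ e₂ col c := fun u v w huv hvw huw =>
  (h u w).2 ⟨huw, ((h u v).1 huv).2.trans ((h v w).1 hvw).2⟩

lemma adjOfColour_of_edge {e₁ e₂ : E → V} {col : E → C} (hloop : ∀ e, e₁ e ≠ e₂ e) (e : E) :
    adjOfColour e₁ e₂ col (col e) (e₁ e) (e₂ e) :=
  ⟨hloop e, e, rfl, Or.inl ⟨rfl, rfl⟩⟩

lemma mem_spannedVerts_iff [Fintype V] [DecidableEq V] [Fintype E] {e₁ e₂ : E → V} {col : E → C}
    (hloop : ∀ e, e₁ e ≠ e₂ e) (c : C) (v : V) :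
    v ∈ spannedVerts e₁ e₂ col c ↔ ∃ w, adjOfColour e₁ e₂ col c v w := by
  simp only [spannedVerts, mem_filter, mem_univ, true_and]
  constructor
  · rintro ⟨e, rfl, rfl | rfl⟩
    · exact ⟨e₂ e, adjOfColour_of_edge hloop e⟩
    · exact ⟨e₁ e, (hloop e).symm, e, rfl, Or.inr ⟨rfl, rfl⟩⟩
  · rintro ⟨w, -, e, hc, ⟨h, -⟩ | ⟨-, h⟩⟩
    · exact ⟨e, hc, Or.inl h⟩
    · exact ⟨e, hc, Or.inr h⟩

variable [DecidableEq V] {e₁ e₂ : E → V} {M N : Finset E}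

lemma IsMatchingE.mono (hM : IsMatchingE e₁ e₂ M) (h : N ⊆ M) : IsMatchingE e₁ e₂ N :=
  ⟨fun e he => hM.1 e (h he), fun a ha b hb => hM.2 a (h ha) b (h hb)⟩

lemma IsMatchingE.card_matchedVerts_s16 (hM : IsMatchingE e₁ e₂ M) :
    #(matchedVerts e₁ e₂ M) = 2 * #M := by
  have hpair : ∀ e ∈ M, #(edgeEnds e₁ e₂ e) = 2 := fun e he => card_pair (hM.1 e he)
  rw [matchedVerts, card_biUnion hM.2, sum_congr rfl hpair, sum_const, smul_eq_mul, mul_comm]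

/-- A block of at most `2k + 1` vertices holds at most `k` edges of a matching. -/
lemma IsMatchingE.card_le_of_blocks [Fintype V] {B : Type*} [Fintype B] [DecidableEq B]
    (hM : IsMatchingE e₁ e₂ M) (b : V → B) (hb : ∀ e, b (e₁ e) = b (e₂ e)) {k : ℕ}
    (hk : ∀ β, #{v | b v = β} ≤ 2 * k + 1) : #M ≤ Fintype.card B * k := by
  have hblock : ∀ β, #{e ∈ M | b (e₁ e) = β} ≤ k := by
    intro β
    have hsub : matchedVerts e₁ e₂ {e ∈ M | b (e₁ e) = β} ⊆ ({v | b v = β} : Finset V) := by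
      intro v hv
      obtain ⟨e, he, hv⟩ := mem_biUnion.mp hv
      rw [mem_filter] at he
      rcases mem_insert.mp hv with rfl | hv
      · simpa using he.2
      · simpa [mem_singleton.mp hv, ← hb] using he.2
    have := (card_le_card hsub).trans (hk β)
    rw [(hM.mono (filter_subset _ M)).card_matchedVerts_s16] at this
    omega
  calc #M = ∑ β, #{e ∈ M | b (e₁ e) = β} := card_eq_sum_card_fiberwise fun e _ => mem_univ _
    _ ≤ ∑ _β : B, k := sum_le_sum fun β _ => hblock β
    _ = Fintype.card B * k := by rw [sum_const, card_univ, smul_eq_mul]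

end Multigraph

section FibreGraph

variable {C V κ : Type*} [LinearOrder V] (f : C → V → κ)

abbrev FibreEdge := {p : C × V × V // p.2.1 < p.2.2 ∧ f p.1 p.2.1 = f p.1 p.2.2}

variable {f}

def FibreEdge.src (e : FibreEdge f) : V := e.1.2.1

def FibreEdge.tgt (e : FibreEdge f) : V := e.1.2.2

def FibreEdge.colour (e : FibreEdge f) : C := e.1.1

lemma FibreEdge.src_ne_tgt (e : FibreEdge f) : e.src ≠ e.tgt := e.2.1.ne

lemma adjOfColour_fibreEdge (c : C) (u v : V) :
    adjOfColour (FibreEdge.src (f := f)) FibreEdge.tgt FibreEdge.colour c u v ↔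
      u ≠ v ∧ f c u = f c v := by
  constructor
  · rintro ⟨huv, e, rfl, ⟨rfl, rfl⟩ | ⟨rfl, rfl⟩⟩
    · exact ⟨huv, e.2.2⟩
    · exact ⟨huv, e.2.2.symm⟩
  · rintro ⟨huv, hf⟩
    refine ⟨huv, ?_⟩
    rcases huv.lt_or_gt with h | h
    · exact ⟨⟨(c, u, v), h, hf⟩, rfl, Or.inl ⟨rfl, rfl⟩⟩
    · exact ⟨⟨(c, v, u), h, hf.symm⟩, rfl, Or.inr ⟨rfl, rfl⟩⟩

variable [Fintype C] [Fintype V] [DecidableEq V] [DecidableEq κ]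

/-- The colour of an edge determines it once its endpoints are known. -/
lemma edgeMult_fibreEdge_le (u v : V) :
    edgeMult (FibreEdge.src (f := f)) FibreEdge.tgt u v ≤ #{c | u ≠ v ∧ f c u = f c v} := by
  refine card_le_card_of_injOn FibreEdge.colour ?_ ?_
  · rintro ⟨⟨c, x, y⟩, hlt, hxy⟩ he
    rw [mem_coe, mem_filter] at he
    rw [mem_coe, mem_filter]
    simp only [mem_univ, true_and, FibreEdge.src, FibreEdge.tgt, FibreEdge.colour] at he ⊢
    rcases he with ⟨rfl, rfl⟩ | ⟨rfl, rfl⟩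
    · exact ⟨hlt.ne, hxy⟩
    · exact ⟨hlt.ne', hxy.symm⟩
  · intro e he e' he' hcc
    rw [mem_coe, mem_filter] at he he'
    have hlt : e.src < e.tgt := e.2.1
    have hlt' : e'.src < e'.tgt := e'.2.1
    suffices e.src = e'.src ∧ e.tgt = e'.tgt from
      Subtype.ext (Prod.ext hcc (Prod.ext this.1 this.2))
    rcases he.2 with ⟨h1, h2⟩ | ⟨h1, h2⟩ <;> rcases he'.2 with ⟨h1', h2'⟩ | ⟨h1', h2'⟩ <;>
      first | exact ⟨h1.trans h1'.symm, h2.trans h2'.symm⟩ | order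

lemma exists_fin_fibreGraph (f : C → V → κ) :
    ∃ (NE : ℕ) (e₁ e₂ : Fin NE → V) (col : Fin NE → C), (∀ e, e₁ e ≠ e₂ e) ∧
      (∀ c u v, adjOfColour e₁ e₂ col c u v ↔ u ≠ v ∧ f c u = f c v) ∧
      ∀ u v, edgeMult e₁ e₂ u v ≤ #{c | u ≠ v ∧ f c u = f c v} := by
  let τ := (Fintype.equivFin (FibreEdge f)).symm
  refine ⟨_, FibreEdge.src ∘ τ, FibreEdge.tgt ∘ τ, FibreEdge.colour ∘ τ,
    fun e => (τ e).src_ne_tgt, ?_, fun u v => ?_⟩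
  · rw [adjOfColour_comp_equiv]
    exact adjOfColour_fibreEdge
  · rw [edgeMult_comp_equiv]
    exact edgeMult_fibreEdge_le u v

end FibreGraph

lemma card_le_div_add_one_of_modEq {n q : ℕ} (s : Finset (Fin n))
    (hs : ∀ a ∈ s, ∀ b ∈ s, (a : ℕ) ≡ b [MOD q]) : #s ≤ n / q + 1 := by
  calc #s ≤ #(range (n / q + 1)) := by
        refine card_le_card_of_injOn (fun a => (a : ℕ) / q) (fun a _ => ?_) fun a ha b hb hab => ?_
        · simpa [Nat.lt_succ_iff] using Nat.div_le_div_right a.isLt.le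
        · have h1 := Nat.div_add_mod a q
          have h2 := Nat.div_add_mod b q
          have h3 : (a : ℕ) % q = b % q := hs a ha b hb
          simp only at hab
          exact Fin.ext (by rw [← h1, ← h2, hab, h3])
    _ = n / q + 1 := card_range _

section TriangleKey

variable {d : ℕ}

/-- The fibres of `triangleKey i j` are the triangle `{i, i + j, i - j}` and the pairs
`{i + a, i - a}` for `a ≠ j`; for `1 ≤ j ≤ d` these are `d - 1` edges and one triangle. -/
def triangleKey (i : ZMod (2 * d + 1)) (j : ℕ) (x : ZMod (2 * d + 1)) : ℕ :=
  if (x - i).valMinAbs.natAbs = j then 0 else (x - i).valMinAbs.natAbs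

lemma ZMod.isUnit_two_odd : IsUnit (2 : ZMod (2 * d + 1)) := by
  have := (ZMod.isUnit_iff_coprime 2 (2 * d + 1)).mpr
    (Nat.coprime_two_left.mpr (odd_two_mul_add_one d))
  exact_mod_cast this

lemma exists_ne_triangleKey_eq {j : ℕ} (hj : 1 ≤ j) (hjd : j ≤ d) (i x : ZMod (2 * d + 1)) :
    ∃ y, y ≠ x ∧ triangleKey i j y = triangleKey i j x := by
  by_cases hx : x = i
  · subst hx
    have hval : (j : ZMod (2 * d + 1)).valMinAbs.natAbs = j := by
      rw [ZMod.valMinAbs_natCast_of_le_half (by omega)]; rfl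
    refine ⟨x + j, ?_, ?_⟩
    · intro h
      have h0 : ((j : ℕ) : ZMod (2 * d + 1)) = 0 := by linear_combination h
      rw [ZMod.natCast_eq_zero_iff] at h0
      exact absurd (Nat.le_of_dvd (by omega) h0) (by omega)
    · simp [triangleKey, hval]
  · refine ⟨i - (x - i), fun h => hx ?_, ?_⟩
    · have h2 : (2 : ZMod (2 * d + 1)) * (x - i) = 2 * 0 := by linear_combination -h
      exact sub_eq_zero.mp (ZMod.isUnit_two_odd.mul_left_cancel h2)
    · simp only [triangleKey, sub_sub_cancel_left, ZMod.natAbs_valMinAbs_neg]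

lemma triangleKey_eq_cases {i x y : ZMod (2 * d + 1)} {j : ℕ} (hxy : x ≠ y)
    (h : triangleKey i j x = triangleKey i j y) :
    x + y = 2 * i ∨ (i = x ∧ j = (y - x).valMinAbs.natAbs) ∨
      (i = y ∧ j = (x - y).valMinAbs.natAbs) := by
  have hsame : (x - i).valMinAbs.natAbs = (y - i).valMinAbs.natAbs → x + y = 2 * i := by
    intro h'
    rcases ZMod.natAbs_valMinAbs_eq_natAbs_valMinAbs.mp h' with h' | h'
    · exact absurd (sub_left_inj.mp h') hxy
    · linear_combination h'
  have hzero (z : ZMod (2 * d + 1)) (hz : 0 = z.valMinAbs.natAbs) : z = 0 :=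
    (ZMod.valMinAbs_eq_zero z).mp (Int.natAbs_eq_zero.mp hz.symm)
  unfold triangleKey at h
  split_ifs at h with hx hy hy
  · exact Or.inl (hsame (hx.trans hy.symm))
  · obtain rfl : i = y := (sub_eq_zero.mp (hzero _ h)).symm
    exact Or.inr (Or.inr ⟨rfl, hx.symm⟩)
  · obtain rfl : i = x := (sub_eq_zero.mp (hzero _ h.symm)).symm
    exact Or.inr (Or.inl ⟨rfl, hy.symm⟩)
  · exact Or.inl (hsame h)

def colourKey (d c : ℕ) : ZMod (2 * d + 1) → ℕ :=
  triangleKey (c : ZMod (2 * d + 1)) (c % d + 1)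

lemma card_colourKey_eq_le (n : ℕ) (x y : ZMod (2 * d + 1)) :
    #{c : Fin n | x ≠ y ∧ colourKey d c x = colourKey d c y} ≤
      n / (2 * d + 1) + 1 + 2 * (n / ((2 * d + 1) * d) + 1) := by
  have hcentre : #{c : Fin n | x + y = 2 * ((c : ℕ) : ZMod (2 * d + 1))} ≤ n / (2 * d + 1) + 1 := by
    refine card_le_div_add_one_of_modEq _ fun a ha b hb => ?_
    simp only [mem_filter, mem_univ, true_and] at ha hb
    exact (ZMod.natCast_eq_natCast_iff _ _ _).mp
      (ZMod.isUnit_two_odd.mul_left_cancel (ha.symm.trans hb))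
  have htriangle (z w : ZMod (2 * d + 1)) :
      #{c : Fin n | (c : ZMod (2 * d + 1)) = z ∧ (c : ℕ) % d + 1 = (w - z).valMinAbs.natAbs} ≤
        n / ((2 * d + 1) * d) + 1 := by
    refine card_le_div_add_one_of_modEq _ fun a ha b hb => ?_
    simp only [mem_filter, mem_univ, true_and] at ha hb
    have hcop : Nat.Coprime (2 * d + 1) d := by simp
    refine (Nat.modEq_and_modEq_iff_modEq_mul hcop).mp ⟨?_, ?_⟩
    · exact (ZMod.natCast_eq_natCast_iff _ _ _).mp (ha.1.trans hb.1.symm)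
    · exact Nat.succ_injective (ha.2.trans hb.2.symm)
  have hsub : ({c : Fin n | x ≠ y ∧ colourKey d c x = colourKey d c y} : Finset (Fin n)) ⊆
      ({c | x + y = 2 * ((c : ℕ) : ZMod (2 * d + 1))} : Finset (Fin n)) ∪
        (({c | (c : ZMod (2 * d + 1)) = x ∧ (c : ℕ) % d + 1 = (y - x).valMinAbs.natAbs} :
          Finset (Fin n)) ∪
          ({c | (c : ZMod (2 * d + 1)) = y ∧ (c : ℕ) % d + 1 = (x - y).valMinAbs.natAbs} :
            Finset (Fin n))) := by
    intro c hc
    simp only [mem_filter, mem_univ, true_and, mem_union] at hc ⊢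
    rcases triangleKey_eq_cases hc.1 hc.2 with h | ⟨h1, h2⟩ | ⟨h1, h2⟩
    · exact Or.inl h
    · exact Or.inr (Or.inl ⟨h1, h2⟩)
    · exact Or.inr (Or.inr ⟨h1, h2⟩)
  calc _ ≤ _ := card_le_card hsub
    _ ≤ _ := (card_union_le _ _).trans (Nat.add_le_add_left (card_union_le _ _) _)
    _ ≤ _ := by linarith [hcentre, htriangle x y, htriangle y x]

end TriangleKey

/-- The graph `G`: `t` disjoint copies of `H` on `ZMod (2d + 1)`, colour `c` of `H` having
the classes of `colourKey d c`. -/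
lemma exists_copies_multigraph (d t n : ℕ) (hd : 0 < d) :
    ∃ (NV NE : ℕ) (e₁ e₂ : Fin NE → Fin NV) (col : Fin NE → Fin n),
      NV = t * (2 * d + 1) ∧ (∀ e, e₁ e ≠ e₂ e) ∧
      (∀ c, IsCliqueUnion e₁ e₂ col c ∧ #(spannedVerts e₁ e₂ col c) = NV) ∧
      (∀ u v, edgeMult e₁ e₂ u v ≤ n / (2 * d + 1) + 1 + 2 * (n / ((2 * d + 1) * d) + 1)) ∧
      ∀ M, IsMatchingE e₁ e₂ M → #M ≤ t * d := by
  let σ := Fintype.equivFin (Fin t × ZMod (2 * d + 1))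
  let f : Fin n → Fin _ → Fin t × ℕ := fun c a => ((σ.symm a).1, colourKey d c (σ.symm a).2)
  obtain ⟨NE, e₁, e₂, col, hloop, hadj, hmult⟩ := exists_fin_fibreGraph f
  have hblock (e) : (σ.symm (e₁ e)).1 = (σ.symm (e₂ e)).1 :=
    (Prod.ext_iff.mp ((hadj (col e) _ _).1 (adjOfColour_of_edge hloop e)).2).1
  refine ⟨_, NE, e₁, e₂, col, by simp [ZMod.card], hloop, fun c => ⟨?_, ?_⟩, fun u v => ?_,
    fun M hM => ?_⟩
  · exact isCliqueUnion_of_adjOfColour_iff (f c) (hadj c)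
  · suffices ∀ a, a ∈ spannedVerts e₁ e₂ col c by
      rw [eq_univ_of_forall this, card_univ, Fintype.card_fin]
    intro a
    obtain ⟨y, hy, hkey⟩ :=
      exists_ne_triangleKey_eq (Nat.le_add_left 1 _) (Nat.mod_lt c hd) c (σ.symm a).2
    refine (mem_spannedVerts_iff hloop c a).mpr ⟨σ ((σ.symm a).1, y), (hadj _ _ _).mpr ⟨?_, ?_⟩⟩
    · intro h
      have h' : σ.symm a = ((σ.symm a).1, y) := σ.symm_apply_eq.mpr h
      exact hy (congrArg Prod.snd h').symm
    · simp only [f, Equiv.symm_apply_apply]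
      exact Prod.ext rfl hkey.symm
  · refine (hmult u v).trans ((card_le_card fun c hc => ?_).trans
      (card_colourKey_eq_le n (σ.symm u).2 (σ.symm v).2))
    simp only [mem_filter, mem_univ, true_and, f, Prod.ext_iff] at hc ⊢
    refine ⟨fun h => hc.1 (σ.symm.injective (Prod.ext hc.2.1 h)), hc.2.2⟩
  · rw [← Fintype.card_fin t]
    refine hM.card_le_of_blocks (fun a => (σ.symm a).1) hblock fun s => ?_
    calc #{a | (σ.symm a).1 = s} ≤ #(univ : Finset (ZMod (2 * d + 1))) :=
          card_le_card_of_injOn (fun a => (σ.symm a).2) (fun _ _ => mem_coe.mpr (mem_univ _))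
            fun a ha b hb h => σ.symm.injective (Prod.ext (by simp_all) h)
      _ = 2 * d + 1 := by rw [card_univ, ZMod.card]

lemma three_mul_sq_lt_of_cube_mul_log_lt {d n : ℕ} (hd : 2 ≤ d)
    (hn : 10 * (d : ℝ) ^ 3 * Real.log d < n) : 3 * (d : ℝ) ^ 2 < n := by
  have hd' : (2 : ℝ) ≤ d := by exact_mod_cast hd
  have hlog : 0.69 < Real.log d :=
    Real.log_two_gt_d9.trans_le' (by norm_num) |>.trans_le (Real.log_le_log (by norm_num) hd')
  have hcube : 0 < 10 * (d : ℝ) ^ 3 := by positivity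
  have hsq : 0 < (d : ℝ) ^ 2 := by positivity
  nlinarith [mul_lt_mul_of_pos_left hlog hcube]

lemma cast_colourKey_bound_le {d n : ℕ} (hd : 1 ≤ d) (hn : 3 * (d : ℝ) ^ 2 ≤ n) :
    ((n / (2 * d + 1) + 1 + 2 * (n / ((2 * d + 1) * d) + 1) : ℕ) : ℝ) ≤
      (n : ℝ) / (2 * d) + 2 * n / (d : ℝ) ^ 2 := by
  have hd' : (1 : ℝ) ≤ d := by exact_mod_cast hd
  have hcentre : ((n / (2 * d + 1) : ℕ) : ℝ) ≤ n / (2 * d) := by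
    refine Nat.cast_div_le.trans (div_le_div_of_nonneg_left n.cast_nonneg (by positivity) ?_)
    push_cast
    linarith
  have htriangle : 2 * ((n / ((2 * d + 1) * d) : ℕ) : ℝ) ≤ n / (d : ℝ) ^ 2 := by
    have : ((n / ((2 * d + 1) * d) : ℕ) : ℝ) ≤ n / ((2 * d + 1) * d) := by
      exact_mod_cast Nat.cast_div_le
    refine (mul_le_mul_of_nonneg_left this zero_le_two).trans ?_
    rw [mul_div_assoc', div_le_div_iff₀ (by positivity) (by positivity)]
    nlinarith [n.cast_nonneg (α := ℝ), sq_nonneg (d : ℝ)]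
  have hconst : 3 ≤ (n : ℝ) / (d : ℝ) ^ 2 := (le_div_iff₀ (by positivity)).mpr hn
  push_cast
  linarith [show 2 * (n : ℝ) / (d : ℝ) ^ 2 = n / (d : ℝ) ^ 2 + n / (d : ℝ) ^ 2 by ring]

/-- for `d ≥ 2` and `n > 10 d³ log d` with `d ∣ n - 1`, there is an
`n`-edge-coloured multigraph whose colour classes are disjoint unions of
non-trivial cliques spanning at least `(2 + 1/d)(n-1)` vertices, with edge
multiplicity at most `n/(2d) + O(n/d²)`, and with no matching of size `n`. -/
theorem stmt_16 :
    ∃ K : ℝ, 0 < K ∧ ∀ d n : ℕ, 2 ≤ d →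
      10 * (d : ℝ) ^ 3 * Real.log d < (n : ℝ) → d ∣ (n - 1) →
      ∃ (NV NE : ℕ) (e₁ e₂ : Fin NE → Fin NV) (col : Fin NE → Fin n),
        (∀ e, e₁ e ≠ e₂ e) ∧
        (∀ c : Fin n, IsCliqueUnion e₁ e₂ col c ∧
          (2 + 1 / (d : ℝ)) * ((n : ℝ) - 1) ≤ ((spannedVerts e₁ e₂ col c).card : ℝ)) ∧
        (∀ u v : Fin NV,
          ((Finset.univ.filter fun e : Fin NE =>
            (e₁ e = u ∧ e₂ e = v) ∨ (e₁ e = v ∧ e₂ e = u)).card : ℝ) ≤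
            (n : ℝ) / (2 * d) + K * (n : ℝ) / (d : ℝ) ^ 2) ∧
        ¬ ∃ M : Finset (Fin NE), IsMatchingE e₁ e₂ M ∧ n ≤ M.card := by
  refine ⟨2, two_pos, fun d n hd hn hdvd => ?_⟩
  have hn3 := three_mul_sq_lt_of_cube_mul_log_lt hd hn
  have hn1 : 1 ≤ n := by
    have hd' : (2 : ℝ) ≤ d := by exact_mod_cast hd
    have : (1 : ℝ) ≤ n := by nlinarith
    exact_mod_cast this
  have htd : (n - 1) / d * d = n - 1 := Nat.div_mul_cancel hdvd
  obtain ⟨NV, NE, e₁, e₂, col, rfl, hloop, hcol, hmult, hmatch⟩ :=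
    exists_copies_multigraph d ((n - 1) / d) n (by omega)
  refine ⟨_, NE, e₁, e₂, col, hloop, fun c => ⟨(hcol c).1, ?_⟩, fun u v => ?_, ?_⟩
  · have htd' : (((n - 1) / d : ℕ) : ℝ) * d = n - 1 := by
      rw [← Nat.cast_mul, htd, Nat.cast_sub hn1, Nat.cast_one]
    rw [(hcol c).2, ← htd']
    refine le_of_eq ?_
    push_cast
    field_simp
  · exact (Nat.cast_le.mpr (hmult u v)).trans (cast_colourKey_bound_le (by omega) hn3.le)
  · rintro ⟨M, hM, hcard⟩
    have := hmatch M hM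
    omega
end

section
/- Every symmetric Latin square of order n whose main diagonal is constant (all diagonal entries equal to one fixed symbol) gives rise to a (2n)-vertex graph edge-coloured with n-1 colours in which every colour class is a 2-factor; consequently, a full rainbow matching in this graph yields a partial transversal of size n-1 in the Latin square. -/
open Finset

set_option linter.unusedSectionVars false


section Orient

variable {ι κ : Type*} [DecidableEq ι] [DecidableEq κ]

def edeg (f g : κ → ι) (E : Finset κ) (x : ι) : ℕ :=
  (E.filter fun c => f c = x).card + (E.filter fun c => g c = x).card

lemma edeg_mono (f g : κ → ι) {E E' : Finset κ} (h : E' ⊆ E) (x : ι) :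
    edeg f g E' x ≤ edeg f g E x :=
  Nat.add_le_add (card_le_card (filter_subset_filter _ h))
    (card_le_card (filter_subset_filter _ h))

lemma edeg_erase (f g : κ → ι) {E : Finset κ} {c : κ} (hc : c ∈ E) {x : ι}
    (hx : f c = x ∨ g c = x) : edeg f g (E.erase c) x + 1 ≤ edeg f g E x := by
  unfold edeg
  rw [filter_erase, filter_erase]
  rcases hx with h | h
  · have h1 : c ∈ E.filter fun c => f c = x := mem_filter.2 ⟨hc, h⟩
    have h2 := Finset.card_erase_add_one h1
    have h3 : ((E.filter fun c => g c = x).erase c).card ≤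
        (E.filter fun c => g c = x).card := card_erase_le
    omega
  · have h1 : c ∈ E.filter fun c => g c = x := mem_filter.2 ⟨hc, h⟩
    have h2 := Finset.card_erase_add_one h1
    have h3 : ((E.filter fun c => f c = x).erase c).card ≤
        (E.filter fun c => f c = x).card := card_erase_le
    omega

lemma edeg_eq_zero (f g : κ → ι) {E : Finset κ} {x : ι} (h : edeg f g E x = 0) :
    ∀ c ∈ E, f c ≠ x ∧ g c ≠ x := by
  intro c hc
  unfold edeg at h
  rw [Nat.add_eq_zero, card_eq_zero, card_eq_zero, filter_eq_empty_iff,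
    filter_eq_empty_iff] at h
  exact ⟨h.1 hc, h.2 hc⟩

lemma ite_ne_of {P : Prop} [Decidable P] {a b x : ι} (ha : a ≠ x) (hb : b ≠ x) :
    (if P then a else b) ≠ x := by split <;> assumption

lemma slot_of_ite {P : Prop} [Decidable P] (a b : ι) :
    a = (if P then a else b) ∨ b = (if P then a else b) := by
  split
  · exact Or.inl rfl
  · exact Or.inr rfl

/-- Good orientation predicate. -/
def GoodO (f g : κ → ι) (E : Finset κ) (u v : Option ι) (o : κ → Bool) : Prop :=
  (∀ c ∈ E, ∀ c' ∈ E, c ≠ c' → (if o c then f c else g c) ≠ (if o c' then f c' else g c')) ∧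
  (∀ c ∈ E, ∀ c' ∈ E, c ≠ c' → (if o c then g c else f c) ≠ (if o c' then g c' else f c')) ∧
  (∀ c ∈ E, u ≠ some (if o c then f c else g c)) ∧
  (∀ c ∈ E, v ≠ some (if o c then g c else f c))

lemma assemble (f g : κ → ι) (E : Finset κ) (c : κ) (hc : c ∈ E) (b : Bool)
    (o' : κ → Bool) (u v : Option ι)
    (hrow' : ∀ c1 ∈ E.erase c, ∀ c2 ∈ E.erase c, c1 ≠ c2 →
      (if o' c1 then f c1 else g c1) ≠ (if o' c2 then f c2 else g c2))
    (hcol' : ∀ c1 ∈ E.erase c, ∀ c2 ∈ E.erase c, c1 ≠ c2 →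
      (if o' c1 then g c1 else f c1) ≠ (if o' c2 then g c2 else f c2))
    (hU : ∀ c' ∈ E.erase c, u ≠ some (if o' c' then f c' else g c'))
    (hV : ∀ c' ∈ E.erase c, v ≠ some (if o' c' then g c' else f c'))
    (hR : ∀ c' ∈ E.erase c, (if o' c' then f c' else g c') ≠ (if b then f c else g c))
    (hC : ∀ c' ∈ E.erase c, (if o' c' then g c' else f c') ≠ (if b then g c else f c))
    (hUc : u ≠ some (if b then f c else g c))
    (hVc : v ≠ some (if b then g c else f c)) :
    ∃ o : κ → Bool, GoodO f g E u v o := by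
  refine ⟨fun d => if d = c then b else o' d, ?_, ?_, ?_, ?_⟩
  · intro c1 hc1 c2 hc2 hne
    by_cases h1 : c1 = c <;> by_cases h2 : c2 = c
    · exact absurd (h1.trans h2.symm) hne
    · subst h1
      simp only [if_pos rfl, if_neg h2]
      exact fun h => hR c2 (mem_erase.2 ⟨h2, hc2⟩) h.symm
    · subst h2
      simp only [if_pos rfl, if_neg h1]
      exact hR c1 (mem_erase.2 ⟨h1, hc1⟩)
    · simp only [if_neg h1, if_neg h2]
      exact hrow' c1 (mem_erase.2 ⟨h1, hc1⟩) c2 (mem_erase.2 ⟨h2, hc2⟩) hne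
  · intro c1 hc1 c2 hc2 hne
    by_cases h1 : c1 = c <;> by_cases h2 : c2 = c
    · exact absurd (h1.trans h2.symm) hne
    · subst h1
      simp only [if_pos rfl, if_neg h2]
      exact fun h => hC c2 (mem_erase.2 ⟨h2, hc2⟩) h.symm
    · subst h2
      simp only [if_pos rfl, if_neg h1]
      exact hC c1 (mem_erase.2 ⟨h1, hc1⟩)
    · simp only [if_neg h1, if_neg h2]
      exact hcol' c1 (mem_erase.2 ⟨h1, hc1⟩) c2 (mem_erase.2 ⟨h2, hc2⟩) hne
  · intro c1 hc1
    by_cases h1 : c1 = c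
    · subst h1; simpa using hUc
    · simp only [if_neg h1]
      exact hU c1 (mem_erase.2 ⟨h1, hc1⟩)
  · intro c1 hc1
    by_cases h1 : c1 = c
    · subst h1; simpa using hVc
    · simp only [if_neg h1]
      exact hV c1 (mem_erase.2 ⟨h1, hc1⟩)

lemma orient (f g : κ → ι) (E : Finset κ) :
    (∀ c ∈ E, f c ≠ g c) →
    (∀ x, edeg f g E x ≤ 2) →
    ∀ u v : Option ι,
    (∀ x, u = some x → edeg f g E x ≤ 1) →
    (∀ x, v = some x → edeg f g E x ≤ 1) →
    (∀ x, u = some x → v = some x → edeg f g E x = 0) →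
    ∃ o : κ → Bool, GoodO f g E u v o := by
  induction E using Finset.strongInduction with
  | _ E ih =>
    intro hne hdeg u v hu hv huv
    rcases eq_or_ne E ∅ with rfl | hEne
    · exact ⟨fun _ => true, fun c hc => absurd hc (notMem_empty c),
        fun c hc => absurd hc (notMem_empty c), fun c hc => absurd hc (notMem_empty c),
        fun c hc => absurd hc (notMem_empty c)⟩
    have hsub : ∀ c ∈ E, E.erase c ⊂ E := fun c hc => erase_ssubset hc
    by_cases hcase1 : ∃ x, v = some x ∧ ∃ c ∈ E, f c = x ∨ g c = x
    · -- orient edge c with row = x (the constrained col-vertex becomes a row)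
      obtain ⟨x, hvx, c, hc, hslot⟩ := hcase1
      obtain ⟨b, hbr⟩ : ∃ b : Bool, (if b then f c else g c) = x := by
        rcases hslot with h | h
        · exact ⟨true, h⟩
        · exact ⟨false, h⟩
      set w := (if b then g c else f c) with hw
      have hwslot : f c = w ∨ g c = w := by
        cases b <;> simp [hw]
      have hrw : x ≠ w := by
        intro h
        apply hne c hc
        cases b <;> simp_all
      have hdegx : edeg f g (E.erase c) x = 0 := by
        have h1 := edeg_erase f g hc hslot
        have h2 := hv x hvx
        omega
      have hzero := edeg_eq_zero f g hdegx
      have hdegw : edeg f g (E.erase c) w + 1 ≤ edeg f g E w :=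
        edeg_erase f g hc hwslot
      obtain ⟨o', ho'⟩ := ih (E.erase c) (hsub c hc)
        (fun d hd => hne d (mem_of_mem_erase hd))
        (fun y => le_trans (edeg_mono f g (erase_subset c E) y) (hdeg y))
        u (some w)
        (fun y hy => le_trans (edeg_mono f g (erase_subset c E) y) (hu y hy))
        (fun y hy => by
          obtain rfl : w = y := Option.some.inj hy
          have := hdeg w
          omega)
        (fun y hy hy' => by
          obtain rfl : w = y := Option.some.inj hy'
          have := hu w hy
          omega)
      refine assemble f g E c hc b o' u v ho'.1 ho'.2.1 ho'.2.2.1 ?_ ?_ ?_ ?_ ?_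
      · -- v = some x avoids all cols of the rest, since x is isolated in E.erase c
        intro c' hc'
        rw [hvx]
        have hz := hzero c' hc'
        intro h
        exact ite_ne_of hz.2 hz.1 (Option.some.inj h).symm
      · intro c' hc'
        rw [hbr]
        have hz := hzero c' hc'
        exact ite_ne_of hz.1 hz.2
      · exact fun c' hc' h => ho'.2.2.2 c' hc' (by rw [h])
      · rw [hbr]
        intro h
        have h1 := huv x h hvx
        have h2 := edeg_erase f g hc hslot
        omega
      · rw [← hw, hvx]
        intro h
        exact hrw (Option.some.inj h)
    · by_cases hcase2 : ∃ x, u = some x ∧ ∃ c ∈ E, f c = x ∨ g c = x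
      · obtain ⟨x, hux, c, hc, hslot⟩ := hcase2
        obtain ⟨b, hbc⟩ : ∃ b : Bool, (if b then g c else f c) = x := by
          rcases hslot with h | h
          · exact ⟨false, h⟩
          · exact ⟨true, h⟩
        set w := (if b then f c else g c) with hw
        have hwslot : f c = w ∨ g c = w := by
          cases b <;> simp [hw]
        have hrw : x ≠ w := by
          intro h
          apply hne c hc
          cases b <;> simp_all
        have hdegx : edeg f g (E.erase c) x = 0 := by
          have h1 := edeg_erase f g hc hslot
          have h2 := hu x hux
          omega
        have hzero := edeg_eq_zero f g hdegx
        obtain ⟨o', ho'⟩ := ih (E.erase c) (hsub c hc)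
          (fun d hd => hne d (mem_of_mem_erase hd))
          (fun y => le_trans (edeg_mono f g (erase_subset c E) y) (hdeg y))
          (some w) v
          (fun y hy => by
            obtain rfl : w = y := Option.some.inj hy
            have h1 := hdeg w
            have h2 := edeg_erase f g hc hwslot
            omega)
          (fun y hy => le_trans (edeg_mono f g (erase_subset c E) y) (hv y hy))
          (fun y hy hy' => by
            obtain rfl : w = y := Option.some.inj hy
            exact absurd ⟨w, hy', c, hc, hwslot⟩ hcase1)
        refine assemble f g E c hc b o' u v ho'.1 ho'.2.1 ?_ ho'.2.2.2 ?_ ?_ ?_ ?_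
        · intro c' hc'
          rw [hux]
          have hz := hzero c' hc'
          intro h
          exact ite_ne_of hz.1 hz.2 (Option.some.inj h).symm
        · exact fun c' hc' h => ho'.2.2.1 c' hc' (by rw [h])
        · intro c' hc'
          rw [hbc]
          have hz := hzero c' hc'
          exact ite_ne_of hz.2 hz.1
        · rw [← hw, hux]
          intro h
          exact hrw (Option.some.inj h)
        · rw [hbc]
          intro h
          exact hcase1 ⟨x, h, c, hc, hslot⟩
      · obtain ⟨c, hc⟩ := Finset.nonempty_iff_ne_empty.2 hEne
        have hfg := hne c hc
        obtain ⟨o', ho'⟩ := ih (E.erase c) (hsub c hc)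
          (fun d hd => hne d (mem_of_mem_erase hd))
          (fun y => le_trans (edeg_mono f g (erase_subset c E) y) (hdeg y))
          (some (f c)) (some (g c))
          (fun y hy => by
            obtain rfl : f c = y := Option.some.inj hy
            have h1 := hdeg (f c)
            have h2 := edeg_erase f g hc (Or.inl (rfl : f c = f c))
            omega)
          (fun y hy => by
            obtain rfl : g c = y := Option.some.inj hy
            have h1 := hdeg (g c)
            have h2 := edeg_erase f g hc (Or.inr (rfl : g c = g c))
            omega)
          (fun y hy hy' => by
            obtain rfl : f c = y := Option.some.inj hy
            exact absurd (Option.some.inj hy').symm hfg)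
        refine assemble f g E c hc true o' u v ho'.1 ho'.2.1 ?_ ?_ ?_ ?_ ?_ ?_
        · intro c1 hc1 h
          exact hcase2 ⟨_, h, c1, mem_of_mem_erase hc1, slot_of_ite _ _⟩
        · intro c1 hc1 h
          refine hcase1 ⟨_, h, c1, mem_of_mem_erase hc1, ?_⟩
          rcases slot_of_ite (P := o' c1 = true) (g c1) (f c1) with h' | h'
          · exact Or.inr h'
          · exact Or.inl h'
        · exact fun c' hc' h => ho'.2.2.1 c' hc' (by rw [h]; rfl)
        · exact fun c' hc' h => ho'.2.2.2 c' hc' (by rw [h]; rfl)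
        · intro h
          exact hcase2 ⟨f c, by simpa using h, c, hc, Or.inl rfl⟩
        · intro h
          exact hcase1 ⟨g c, by simpa using h, c, hc, Or.inr rfl⟩

end Orient

/-- a symmetric Latin square `S` of order `n` with constant diagonal
symbol `a` gives rise to a graph on the `2n` vertices `Fin n × Bool` (with an edge
`(i,s)(j,t)` of colour `S i j` for all `i ≠ j`), edge-coloured with the `n - 1`
colours `c ≠ a`, in which every colour class is a 2-factor; and every full rainbow
matching of this graph yields a partial transversal of size `n - 1` in `S`. -/
theorem stmt_19 (n : ℕ) (S : Fin n → Fin n → Fin n)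
    (hrow : ∀ i, Function.Injective (S i))
    (hcol : ∀ j, Function.Injective fun i => S i j)
    (hsym : ∀ i j, S i j = S j i)
    (a : Fin n) (hdiag : ∀ i, S i i = a) :
    -- every colour class `c ≠ a` is a 2-factor: each vertex has exactly two
    -- neighbours along edges of colour `c`
    (∀ c : Fin n, c ≠ a → ∀ v : Fin n × Bool,
      (Finset.univ.filter fun w : Fin n × Bool =>
        w.1 ≠ v.1 ∧ S v.1 w.1 = c).card = 2) ∧
    -- a full rainbow matching (one edge of each colour `c ≠ a`, pairwise
    -- vertex-disjoint) yields a partial transversal of size `n - 1`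
    (∀ m : (c : Fin n) → c ≠ a → (Fin n × Bool) × (Fin n × Bool),
      (∀ c hc, ((m c hc).1).1 ≠ ((m c hc).2).1 ∧ S ((m c hc).1).1 ((m c hc).2).1 = c) →
      (∀ c hc c' hc', c ≠ c' →
        ((m c hc).1 ≠ (m c' hc').1 ∧ (m c hc).1 ≠ (m c' hc').2 ∧
         (m c hc).2 ≠ (m c' hc').1 ∧ (m c hc).2 ≠ (m c' hc').2)) →
      ∃ T : Finset (Fin n × Fin n), T.card = n - 1 ∧
        Set.InjOn (fun p : Fin n × Fin n => p.1) ↑T ∧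
        Set.InjOn (fun p : Fin n × Fin n => p.2) ↑T ∧
        Set.InjOn (fun p : Fin n × Fin n => S p.1 p.2) ↑T) := by
  constructor
  · -- each colour class is a 2-factor
    intro c hc v
    obtain ⟨j, hj⟩ := (Finite.injective_iff_surjective.mp (hrow v.1)) c
    have hji : j ≠ v.1 := by
      intro h
      subst h
      rw [hdiag] at hj
      exact hc hj.symm
    have hset : (univ.filter fun w : Fin n × Bool => w.1 ≠ v.1 ∧ S v.1 w.1 = c)
        = {(j, false), (j, true)} := by
      ext w
      simp only [mem_filter, mem_univ, true_and, mem_insert, mem_singleton]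
      constructor
      · rintro ⟨h1, h2⟩
        have hw : w.1 = j := hrow v.1 (h2.trans hj.symm)
        rcases w with ⟨w1, b⟩
        cases b
        · left
          simp only at hw
          rw [hw]
        · right
          simp only at hw
          rw [hw]
      · rintro (rfl | rfl) <;> exact ⟨hji, hj⟩
    rw [hset, card_insert_of_notMem (by simp), card_singleton]
  · -- rainbow matching gives a partial transversal
    intro m hm1 hm2
    classical
    let f : {c : Fin n // c ≠ a} → Fin n := fun c => (m c.1 c.2).1.1
    let g : {c : Fin n // c ≠ a} → Fin n := fun c => (m c.1 c.2).2.1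
    have hne : ∀ c ∈ (univ : Finset {c : Fin n // c ≠ a}), f c ≠ g c :=
      fun c _ => (hm1 c.1 c.2).1
    have hdeg : ∀ x : Fin n, edeg f g (univ : Finset {c : Fin n // c ≠ a}) x ≤ 2 := by
      intro x
      set P := (univ : Finset {c : Fin n // c ≠ a}).filter fun c => f c = x with hP
      set Q := (univ : Finset {c : Fin n // c ≠ a}).filter fun c => g c = x with hQ
      have hPinj : Set.InjOn (fun c : {c : Fin n // c ≠ a} => (m c.1 c.2).1) ↑P := by
        intro c _ c' _ h
        by_contra hcc
        exact (hm2 c.1 c.2 c'.1 c'.2 (fun h' => hcc (Subtype.ext h'))).1 h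
      have hQinj : Set.InjOn (fun c : {c : Fin n // c ≠ a} => (m c.1 c.2).2) ↑Q := by
        intro c _ c' _ h
        by_contra hcc
        have h4 := (hm2 c.1 c.2 c'.1 c'.2 (fun h' => hcc (Subtype.ext h')))
        exact (h4.2.2.2) h
      have hPcard : P.card = (P.image fun c => (m c.1 c.2).1).card :=
        (card_image_of_injOn hPinj).symm
      have hQcard : Q.card = (Q.image fun c => (m c.1 c.2).2).card :=
        (card_image_of_injOn hQinj).symm
      have hdisj : Disjoint (P.image fun c => (m c.1 c.2).1)
          (Q.image fun c => (m c.1 c.2).2) := by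
        rw [disjoint_left]
        intro z hz hz'
        obtain ⟨c, hcP, rfl⟩ := mem_image.1 hz
        obtain ⟨c', hc'Q, hzz⟩ := mem_image.1 hz'
        rcases eq_or_ne c c' with rfl | hcc
        · exact (hm1 c.1 c.2).1 (congrArg Prod.fst hzz).symm
        · exact (hm2 c.1 c.2 c'.1 c'.2 (fun h' => hcc (Subtype.ext h'))).2.1 hzz.symm
      have hsubV : (P.image fun c => (m c.1 c.2).1) ∪ (Q.image fun c => (m c.1 c.2).2)
          ⊆ ({x} : Finset (Fin n)) ×ˢ (univ : Finset Bool) := by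
        intro z hz
        rw [mem_union] at hz
        rw [mem_product, mem_singleton]
        rcases hz with hz | hz
        · obtain ⟨c, hcP, rfl⟩ := mem_image.1 hz
          exact ⟨(mem_filter.1 hcP).2, mem_univ _⟩
        · obtain ⟨c, hcQ, rfl⟩ := mem_image.1 hz
          exact ⟨(mem_filter.1 hcQ).2, mem_univ _⟩
      have h1 := card_le_card hsubV
      rw [card_union_of_disjoint hdisj] at h1
      have h2 : (({x} : Finset (Fin n)) ×ˢ (univ : Finset Bool)).card = 2 := by
        rw [card_product, card_singleton, card_univ]
        simp
      unfold edeg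
      rw [← hP, ← hQ]
      omega
    obtain ⟨o, ho⟩ := orient f g (univ : Finset {c : Fin n // c ≠ a}) hne hdeg none none
      (fun x h => by cases h) (fun x h => by cases h) (fun x h => by cases h)
    set row := fun c : {c : Fin n // c ≠ a} => if o c then f c else g c with hrowdef
    set col := fun c : {c : Fin n // c ≠ a} => if o c then g c else f c with hcoldef
    have hSrc : ∀ c : {c : Fin n // c ≠ a}, S (row c) (col c) = c.1 := by
      intro c
      rw [hrowdef, hcoldef]
      by_cases h : o c
      · simp only [if_pos h]
        exact (hm1 c.1 c.2).2
      · simp only [if_neg h]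
        rw [hsym]
        exact (hm1 c.1 c.2).2
    have hrowinj : Function.Injective row := by
      intro c c' h
      by_contra hcc
      exact ho.1 c (mem_univ c) c' (mem_univ c') hcc h
    have hcolinj : Function.Injective col := by
      intro c c' h
      by_contra hcc
      exact ho.2.1 c (mem_univ c) c' (mem_univ c') hcc h
    refine ⟨(univ : Finset {c : Fin n // c ≠ a}).image fun c => (row c, col c),
      ?_, ?_, ?_, ?_⟩
    · rw [card_image_of_injective _ (fun c c' h => hrowinj (congrArg Prod.fst h)),
        card_univ]
      rw [Fintype.card_subtype_compl, Fintype.card_subtype_eq, Fintype.card_fin]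
    · intro p hp q hq h
      obtain ⟨c, -, rfl⟩ := mem_image.1 (mem_coe.1 hp)
      obtain ⟨c', -, rfl⟩ := mem_image.1 (mem_coe.1 hq)
      rw [hrowinj h]
    · intro p hp q hq h
      obtain ⟨c, -, rfl⟩ := mem_image.1 (mem_coe.1 hp)
      obtain ⟨c', -, rfl⟩ := mem_image.1 (mem_coe.1 hq)
      rw [hcolinj h]
    · intro p hp q hq h
      obtain ⟨c, -, rfl⟩ := mem_image.1 (mem_coe.1 hp)
      obtain ⟨c', -, rfl⟩ := mem_image.1 (mem_coe.1 hq)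
      simp only [hSrc] at h
      rw [Subtype.ext h]
end
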